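/- There exist a simple host graph H with T_H = V_H (all nodes are terminals) and an inclusion minimal terminal spanner G of H such that there is no Nash Equilibrium s in the global edge-buying setting with G(s) = G. -/

import Mathlib

namespace TNCG

/-- A time edge: an undirected edge together with a time label. -/
abbrev TimeEdge (V : Type) := Sym2 V × ℕ

/-- A temporal host graph with terminals: the underlying graph is complete, every
(non-loop) edge carries a nonempty finite set of time labels, and there is a
nonempty set of terminal nodes. -/
structure HostGraph (V : Type) [Fintype V] [DecidableEq V] where
  labels : Sym2 V → Finset ℕ
  labels_nonempty : ∀ e : Sym2 V, ¬ e.IsDiag → (labels e).Nonempty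
  labels_diag : ∀ e : Sym2 V, e.IsDiag → labels e = ∅
  terminals : Finset V
  terminals_nonempty : terminals.Nonempty

variable {V : Type} [Fintype V] [DecidableEq V]

/-- Temporal reachability within a set `A` of time edges: `ReachFrom A t u w` holds if
there is a temporal walk from `u` to `w` all of whose labels are `≥ t` and non-decreasing. -/
inductive ReachFrom (A : Finset (TimeEdge V)) : ℕ → V → V → Prop
  | refl (t : ℕ) (v : V) : ReachFrom A t v v
  | step {t : ℕ} {u v w : V} (l : ℕ) (hle : t ≤ l) (he : (s(u, v), l) ∈ A)
      (htail : ReachFrom A l v w) : ReachFrom A t u w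

/-- `u` reaches `w` via a temporal path in the time-edge set `A`. -/
def Reaches (A : Finset (TimeEdge V)) (u w : V) : Prop := ReachFrom A 0 u w

/-- A strategy profile: each agent buys a finite set of time edges. -/
abbrev Profile (V : Type) := V → Finset (TimeEdge V)

/-- The set of time edges of the created graph `G(s)`. -/
def built (s : Profile V) : Finset (TimeEdge V) := Finset.univ.biUnion s

/-- The two edge-buying settings. -/
inductive Setting | loc | glob
deriving DecidableEq

/-- The two equilibrium types. -/
inductive EqType | nash | greedy
deriving DecidableEq

/-- A time edge of the host graph. -/
def HostGraph.ValidTimeEdge (H : HostGraph V) (p : TimeEdge V) : Prop :=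
  p.2 ∈ H.labels p.1

/-- Which strategies are allowed for agent `v` in a given setting: in the local setting all
bought time edges must be incident to `v`; in the global setting there is no restriction. -/
def Allowed (H : HostGraph V) : Setting → V → Finset (TimeEdge V) → Prop
  | Setting.loc, v, S => ∀ p ∈ S, H.ValidTimeEdge p ∧ v ∈ p.1
  | Setting.glob, _, S => ∀ p ∈ S, H.ValidTimeEdge p

open Classical in
/-- The cost of agent `v`: the number of bought time edges plus `C` times the number of
unreached terminals. -/
noncomputable def cost (H : HostGraph V) (C : ℝ) (s : Profile V) (v : V) : ℝ :=
  ((s v).card : ℝ) + C * ((H.terminals.filter fun t => ¬ Reaches (built s) v t).card : ℝ)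

/-- The profile obtained from `s` by replacing `v`'s strategy with `S'`. -/
def update (s : Profile V) (v : V) (S' : Finset (TimeEdge V)) : Profile V :=
  fun u => if u = v then S' else s u

/-- `S'` is obtained from `S` by adding or removing a single time edge. -/
def GreedyDev (S S' : Finset (TimeEdge V)) : Prop :=
  (∃ p, p ∉ S ∧ S' = insert p S) ∨ (∃ p ∈ S, S' = S.erase p)

/-- `s` is an equilibrium (Nash or Greedy) in the given setting: every strategy is allowed, and
no agent has an (allowed, and for Greedy Equilibria single-time-edge) improving response. -/
def IsEquilibrium (H : HostGraph V) (C : ℝ) (st : Setting) (et : EqType) (s : Profile V) :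
    Prop :=
  (∀ v, Allowed H st v (s v)) ∧
    ∀ v S', Allowed H st v S' → (et = EqType.greedy → GreedyDev (s v) S') →
      ¬ cost H C (update s v S') v < cost H C s v

/-- The social cost of a strategy profile. -/
noncomputable def socialCost (H : HostGraph V) (C : ℝ) (s : Profile V) : ℝ :=
  ∑ v, cost H C s v

/-- A social optimum: an allowed strategy profile of minimum social cost. -/
def IsSocialOptimum (H : HostGraph V) (C : ℝ) (st : Setting) (s : Profile V) : Prop :=
  (∀ v, Allowed H st v (s v)) ∧
    ∀ s' : Profile V, (∀ v, Allowed H st v (s' v)) → socialCost H C s ≤ socialCost H C s'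

/-- The lifetime of a host graph: its largest time label. -/
def HostGraph.maxLabel (H : HostGraph V) : ℕ :=
  Finset.univ.sup fun p : V × V => (H.labels s(p.1, p.2)).sup id

/-- The simple graph whose edges are the host edges carrying the maximum label. -/
def maxLabelGraph (H : HostGraph V) : SimpleGraph V where
  Adj u v := u ≠ v ∧ H.maxLabel ∈ H.labels s(u, v)
  symm := by
    constructor
    intro u v h
    exact ⟨Ne.symm h.1, by rw [Sym2.eq_swap]; exact h.2⟩
  loopless := ⟨fun v h => h.1 rfl⟩

/-- The simple graph underlying a set of time edges. -/
def edgesGraph (A : Finset (TimeEdge V)) : SimpleGraph V where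
  Adj u v := u ≠ v ∧ ∃ l, (s(u, v), l) ∈ A
  symm := by
    constructor
    rintro u v ⟨h, l, hl⟩
    exact ⟨Ne.symm h, l, by rw [Sym2.eq_swap]; exact hl⟩
  loopless := ⟨fun v h => h.1 rfl⟩

/-- A terminal spanner: a valid time-edge set in which every node reaches every terminal. -/
def IsTerminalSpanner (H : HostGraph V) (A : Finset (TimeEdge V)) : Prop :=
  (∀ p ∈ A, H.ValidTimeEdge p) ∧ ∀ v : V, ∀ t ∈ H.terminals, Reaches A v t

/-- An inclusion minimal terminal spanner. -/
def IsMinimalTerminalSpanner (H : HostGraph V) (A : Finset (TimeEdge V)) : Prop :=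
  IsTerminalSpanner H A ∧ ∀ p ∈ A, ¬ IsTerminalSpanner H (A.erase p)

/-- A host graph is simple if every (non-loop) edge carries exactly one time label. -/
def HostGraph.Simple (H : HostGraph V) : Prop :=
  ∀ e : Sym2 V, ¬ e.IsDiag → (H.labels e).card = 1


/-! ### Auxiliary material for the counterexample -/

/-- Monotonicity of temporal reachability in the time-edge set. -/
lemma reach_mono {V : Type} [Fintype V] [DecidableEq V] {A B : Finset (TimeEdge V)}
    (hAB : A ⊆ B) : ∀ {t : ℕ} {u w : V}, ReachFrom A t u w → ReachFrom B t u w := by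
  intro t u w h
  induction h with
  | refl t v => exact .refl t v
  | step l hle he htail ih => exact .step l hle (hAB he) ih

/-- If a node reaches every terminal, its cost is just the number of bought edges. -/
lemma cost_of_reach_all {V : Type} [Fintype V] [DecidableEq V] (H : HostGraph V) (C : ℝ)
    (s : Profile V) (v : V) (h : ∀ t ∈ H.terminals, Reaches (built s) v t) :
    cost H C s v = ((s v).card : ℝ) := by
  classical
  unfold cost
  have : (H.terminals.filter fun t => ¬ Reaches (built s) v t) = ∅ := by
    apply Finset.filter_eq_empty_iff.mpr
    intro t ht
    simp only [not_not]
    convert h t ht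
  rw [this]
  simp

/-- The labels of the host graph of the counterexample. -/
def HXlabels : Sym2 (Fin 4) → Finset ℕ := fun e =>
  if e = s(0,1) then {1} else if e = s(0,2) then {1} else if e = s(0,3) then {2}
  else if e = s(1,2) then {3} else if e = s(1,3) then {1} else if e = s(2,3) then {3} else ∅

/-- The host graph of the counterexample. -/
def HX : HostGraph (Fin 4) where
  labels := HXlabels
  labels_nonempty := by decide
  labels_diag := by decide
  terminals := Finset.univ
  terminals_nonempty := ⟨0, Finset.mem_univ 0⟩

def AX : Finset (TimeEdge (Fin 4)) := {(s(0,1),1), (s(0,2),1), (s(0,3),2), (s(1,2),3), (s(2,3),3)}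
def A1X : Finset (TimeEdge (Fin 4)) := {(s(0,2),1), (s(0,3),2), (s(1,2),3), (s(2,3),3)}
def A2X : Finset (TimeEdge (Fin 4)) := {(s(0,1),1), (s(0,3),2), (s(1,2),3), (s(2,3),3)}
def A3X : Finset (TimeEdge (Fin 4)) := {(s(0,1),1), (s(0,2),1), (s(1,2),3), (s(2,3),3)}
def A4X : Finset (TimeEdge (Fin 4)) := {(s(0,1),1), (s(0,2),1), (s(0,3),2), (s(2,3),3)}
def A5X : Finset (TimeEdge (Fin 4)) := {(s(0,1),1), (s(0,2),1), (s(0,3),2), (s(1,2),3)}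
def BX : Finset (TimeEdge (Fin 4)) := {(s(0,1),1), (s(0,2),1), (s(1,3),1)}

lemma reach_A_0_0 : Reaches AX (0:Fin 4) 0 := (.refl _ _)
lemma reach_A_0_1 : Reaches AX (0:Fin 4) 1 := (.step (v := 1) 1 (by omega) (by decide) (.refl _ _))
lemma reach_A_0_2 : Reaches AX (0:Fin 4) 2 := (.step (v := 2) 1 (by omega) (by decide) (.refl _ _))
lemma reach_A_0_3 : Reaches AX (0:Fin 4) 3 := (.step (v := 3) 2 (by omega) (by decide) (.refl _ _))
lemma reach_A_1_0 : Reaches AX (1:Fin 4) 0 := (.step (v := 0) 1 (by omega) (by decide) (.refl _ _))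
lemma reach_A_1_1 : Reaches AX (1:Fin 4) 1 := (.refl _ _)
lemma reach_A_1_2 : Reaches AX (1:Fin 4) 2 := (.step (v := 2) 3 (by omega) (by decide) (.refl _ _))
lemma reach_A_1_3 : Reaches AX (1:Fin 4) 3 := (.step (v := 0) 1 (by omega) (by decide) (.step (v := 3) 2 (by omega) (by decide) (.refl _ _)))
lemma reach_A_2_0 : Reaches AX (2:Fin 4) 0 := (.step (v := 0) 1 (by omega) (by decide) (.refl _ _))
lemma reach_A_2_1 : Reaches AX (2:Fin 4) 1 := (.step (v := 1) 3 (by omega) (by decide) (.refl _ _))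
lemma reach_A_2_2 : Reaches AX (2:Fin 4) 2 := (.refl _ _)
lemma reach_A_2_3 : Reaches AX (2:Fin 4) 3 := (.step (v := 3) 3 (by omega) (by decide) (.refl _ _))
lemma reach_A_3_0 : Reaches AX (3:Fin 4) 0 := (.step (v := 0) 2 (by omega) (by decide) (.refl _ _))
lemma reach_A_3_1 : Reaches AX (3:Fin 4) 1 := (.step (v := 2) 3 (by omega) (by decide) (.step (v := 1) 3 (by omega) (by decide) (.refl _ _)))
lemma reach_A_3_2 : Reaches AX (3:Fin 4) 2 := (.step (v := 2) 3 (by omega) (by decide) (.refl _ _))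
lemma reach_A_3_3 : Reaches AX (3:Fin 4) 3 := (.refl _ _)
lemma reach_A_all : ∀ v w : Fin 4, Reaches AX v w := by
  intro v w; fin_cases v <;> fin_cases w <;> first | exact reach_A_0_0 | exact reach_A_0_1 | exact reach_A_0_2 | exact reach_A_0_3 | exact reach_A_1_0 | exact reach_A_1_1 | exact reach_A_1_2 | exact reach_A_1_3 | exact reach_A_2_0 | exact reach_A_2_1 | exact reach_A_2_2 | exact reach_A_2_3 | exact reach_A_3_0 | exact reach_A_3_1 | exact reach_A_3_2 | exact reach_A_3_3
lemma reach_A1_0_0 : Reaches A1X (0:Fin 4) 0 := (.refl _ _)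
lemma reach_A1_0_1 : Reaches A1X (0:Fin 4) 1 := (.step (v := 2) 1 (by omega) (by decide) (.step (v := 1) 3 (by omega) (by decide) (.refl _ _)))
lemma reach_A1_0_2 : Reaches A1X (0:Fin 4) 2 := (.step (v := 2) 1 (by omega) (by decide) (.refl _ _))
lemma reach_A1_0_3 : Reaches A1X (0:Fin 4) 3 := (.step (v := 3) 2 (by omega) (by decide) (.refl _ _))
lemma reach_A1_2_0 : Reaches A1X (2:Fin 4) 0 := (.step (v := 0) 1 (by omega) (by decide) (.refl _ _))
lemma reach_A1_2_1 : Reaches A1X (2:Fin 4) 1 := (.step (v := 1) 3 (by omega) (by decide) (.refl _ _))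
lemma reach_A1_2_2 : Reaches A1X (2:Fin 4) 2 := (.refl _ _)
lemma reach_A1_2_3 : Reaches A1X (2:Fin 4) 3 := (.step (v := 3) 3 (by omega) (by decide) (.refl _ _))
lemma reach_A1_3_0 : Reaches A1X (3:Fin 4) 0 := (.step (v := 0) 2 (by omega) (by decide) (.refl _ _))
lemma reach_A1_3_1 : Reaches A1X (3:Fin 4) 1 := (.step (v := 2) 3 (by omega) (by decide) (.step (v := 1) 3 (by omega) (by decide) (.refl _ _)))
lemma reach_A1_3_2 : Reaches A1X (3:Fin 4) 2 := (.step (v := 2) 3 (by omega) (by decide) (.refl _ _))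
lemma reach_A1_3_3 : Reaches A1X (3:Fin 4) 3 := (.refl _ _)
lemma reach_A1_all : ∀ v : Fin 4, v ≠ 1 → ∀ w : Fin 4, Reaches A1X v w := by
  intro v hv w; fin_cases v <;> fin_cases w <;> first | exact absurd rfl hv | exact reach_A1_0_0 | exact reach_A1_0_1 | exact reach_A1_0_2 | exact reach_A1_0_3 | exact reach_A1_2_0 | exact reach_A1_2_1 | exact reach_A1_2_2 | exact reach_A1_2_3 | exact reach_A1_3_0 | exact reach_A1_3_1 | exact reach_A1_3_2 | exact reach_A1_3_3
lemma reach_A2_0_0 : Reaches A2X (0:Fin 4) 0 := (.refl _ _)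
lemma reach_A2_0_1 : Reaches A2X (0:Fin 4) 1 := (.step (v := 1) 1 (by omega) (by decide) (.refl _ _))
lemma reach_A2_0_2 : Reaches A2X (0:Fin 4) 2 := (.step (v := 1) 1 (by omega) (by decide) (.step (v := 2) 3 (by omega) (by decide) (.refl _ _)))
lemma reach_A2_0_3 : Reaches A2X (0:Fin 4) 3 := (.step (v := 3) 2 (by omega) (by decide) (.refl _ _))
lemma reach_A2_1_0 : Reaches A2X (1:Fin 4) 0 := (.step (v := 0) 1 (by omega) (by decide) (.refl _ _))
lemma reach_A2_1_1 : Reaches A2X (1:Fin 4) 1 := (.refl _ _)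
lemma reach_A2_1_2 : Reaches A2X (1:Fin 4) 2 := (.step (v := 2) 3 (by omega) (by decide) (.refl _ _))
lemma reach_A2_1_3 : Reaches A2X (1:Fin 4) 3 := (.step (v := 0) 1 (by omega) (by decide) (.step (v := 3) 2 (by omega) (by decide) (.refl _ _)))
lemma reach_A2_3_0 : Reaches A2X (3:Fin 4) 0 := (.step (v := 0) 2 (by omega) (by decide) (.refl _ _))
lemma reach_A2_3_1 : Reaches A2X (3:Fin 4) 1 := (.step (v := 2) 3 (by omega) (by decide) (.step (v := 1) 3 (by omega) (by decide) (.refl _ _)))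
lemma reach_A2_3_2 : Reaches A2X (3:Fin 4) 2 := (.step (v := 2) 3 (by omega) (by decide) (.refl _ _))
lemma reach_A2_3_3 : Reaches A2X (3:Fin 4) 3 := (.refl _ _)
lemma reach_A2_all : ∀ v : Fin 4, v ≠ 2 → ∀ w : Fin 4, Reaches A2X v w := by
  intro v hv w; fin_cases v <;> fin_cases w <;> first | exact absurd rfl hv | exact reach_A2_0_0 | exact reach_A2_0_1 | exact reach_A2_0_2 | exact reach_A2_0_3 | exact reach_A2_1_0 | exact reach_A2_1_1 | exact reach_A2_1_2 | exact reach_A2_1_3 | exact reach_A2_3_0 | exact reach_A2_3_1 | exact reach_A2_3_2 | exact reach_A2_3_3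
lemma reach_A3_0_0 : Reaches A3X (0:Fin 4) 0 := (.refl _ _)
lemma reach_A3_0_1 : Reaches A3X (0:Fin 4) 1 := (.step (v := 1) 1 (by omega) (by decide) (.refl _ _))
lemma reach_A3_0_2 : Reaches A3X (0:Fin 4) 2 := (.step (v := 2) 1 (by omega) (by decide) (.refl _ _))
lemma reach_A3_0_3 : Reaches A3X (0:Fin 4) 3 := (.step (v := 2) 1 (by omega) (by decide) (.step (v := 3) 3 (by omega) (by decide) (.refl _ _)))
lemma reach_A3_1_0 : Reaches A3X (1:Fin 4) 0 := (.step (v := 0) 1 (by omega) (by decide) (.refl _ _))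
lemma reach_A3_1_1 : Reaches A3X (1:Fin 4) 1 := (.refl _ _)
lemma reach_A3_1_2 : Reaches A3X (1:Fin 4) 2 := (.step (v := 2) 3 (by omega) (by decide) (.refl _ _))
lemma reach_A3_1_3 : Reaches A3X (1:Fin 4) 3 := (.step (v := 2) 3 (by omega) (by decide) (.step (v := 3) 3 (by omega) (by decide) (.refl _ _)))
lemma reach_A3_2_0 : Reaches A3X (2:Fin 4) 0 := (.step (v := 0) 1 (by omega) (by decide) (.refl _ _))
lemma reach_A3_2_1 : Reaches A3X (2:Fin 4) 1 := (.step (v := 1) 3 (by omega) (by decide) (.refl _ _))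
lemma reach_A3_2_2 : Reaches A3X (2:Fin 4) 2 := (.refl _ _)
lemma reach_A3_2_3 : Reaches A3X (2:Fin 4) 3 := (.step (v := 3) 3 (by omega) (by decide) (.refl _ _))
lemma reach_A3_all : ∀ v : Fin 4, v ≠ 3 → ∀ w : Fin 4, Reaches A3X v w := by
  intro v hv w; fin_cases v <;> fin_cases w <;> first | exact absurd rfl hv | exact reach_A3_0_0 | exact reach_A3_0_1 | exact reach_A3_0_2 | exact reach_A3_0_3 | exact reach_A3_1_0 | exact reach_A3_1_1 | exact reach_A3_1_2 | exact reach_A3_1_3 | exact reach_A3_2_0 | exact reach_A3_2_1 | exact reach_A3_2_2 | exact reach_A3_2_3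
lemma reach_A4_0_0 : Reaches A4X (0:Fin 4) 0 := (.refl _ _)
lemma reach_A4_0_1 : Reaches A4X (0:Fin 4) 1 := (.step (v := 1) 1 (by omega) (by decide) (.refl _ _))
lemma reach_A4_0_2 : Reaches A4X (0:Fin 4) 2 := (.step (v := 2) 1 (by omega) (by decide) (.refl _ _))
lemma reach_A4_0_3 : Reaches A4X (0:Fin 4) 3 := (.step (v := 3) 2 (by omega) (by decide) (.refl _ _))
lemma reach_A4_1_0 : Reaches A4X (1:Fin 4) 0 := (.step (v := 0) 1 (by omega) (by decide) (.refl _ _))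
lemma reach_A4_1_1 : Reaches A4X (1:Fin 4) 1 := (.refl _ _)
lemma reach_A4_1_2 : Reaches A4X (1:Fin 4) 2 := (.step (v := 0) 1 (by omega) (by decide) (.step (v := 2) 1 (by omega) (by decide) (.refl _ _)))
lemma reach_A4_1_3 : Reaches A4X (1:Fin 4) 3 := (.step (v := 0) 1 (by omega) (by decide) (.step (v := 3) 2 (by omega) (by decide) (.refl _ _)))
lemma reach_A4_2_0 : Reaches A4X (2:Fin 4) 0 := (.step (v := 0) 1 (by omega) (by decide) (.refl _ _))
lemma reach_A4_2_1 : Reaches A4X (2:Fin 4) 1 := (.step (v := 0) 1 (by omega) (by decide) (.step (v := 1) 1 (by omega) (by decide) (.refl _ _)))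
lemma reach_A4_2_2 : Reaches A4X (2:Fin 4) 2 := (.refl _ _)
lemma reach_A4_2_3 : Reaches A4X (2:Fin 4) 3 := (.step (v := 3) 3 (by omega) (by decide) (.refl _ _))
lemma reach_A4_all : ∀ v : Fin 4, v ≠ 3 → ∀ w : Fin 4, Reaches A4X v w := by
  intro v hv w; fin_cases v <;> fin_cases w <;> first | exact absurd rfl hv | exact reach_A4_0_0 | exact reach_A4_0_1 | exact reach_A4_0_2 | exact reach_A4_0_3 | exact reach_A4_1_0 | exact reach_A4_1_1 | exact reach_A4_1_2 | exact reach_A4_1_3 | exact reach_A4_2_0 | exact reach_A4_2_1 | exact reach_A4_2_2 | exact reach_A4_2_3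
lemma reach_A5_0_0 : Reaches A5X (0:Fin 4) 0 := (.refl _ _)
lemma reach_A5_0_1 : Reaches A5X (0:Fin 4) 1 := (.step (v := 1) 1 (by omega) (by decide) (.refl _ _))
lemma reach_A5_0_2 : Reaches A5X (0:Fin 4) 2 := (.step (v := 2) 1 (by omega) (by decide) (.refl _ _))
lemma reach_A5_0_3 : Reaches A5X (0:Fin 4) 3 := (.step (v := 3) 2 (by omega) (by decide) (.refl _ _))
lemma reach_A5_1_0 : Reaches A5X (1:Fin 4) 0 := (.step (v := 0) 1 (by omega) (by decide) (.refl _ _))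
lemma reach_A5_1_1 : Reaches A5X (1:Fin 4) 1 := (.refl _ _)
lemma reach_A5_1_2 : Reaches A5X (1:Fin 4) 2 := (.step (v := 2) 3 (by omega) (by decide) (.refl _ _))
lemma reach_A5_1_3 : Reaches A5X (1:Fin 4) 3 := (.step (v := 0) 1 (by omega) (by decide) (.step (v := 3) 2 (by omega) (by decide) (.refl _ _)))
lemma reach_A5_2_0 : Reaches A5X (2:Fin 4) 0 := (.step (v := 0) 1 (by omega) (by decide) (.refl _ _))
lemma reach_A5_2_1 : Reaches A5X (2:Fin 4) 1 := (.step (v := 1) 3 (by omega) (by decide) (.refl _ _))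
lemma reach_A5_2_2 : Reaches A5X (2:Fin 4) 2 := (.refl _ _)
lemma reach_A5_2_3 : Reaches A5X (2:Fin 4) 3 := (.step (v := 0) 1 (by omega) (by decide) (.step (v := 3) 2 (by omega) (by decide) (.refl _ _)))
lemma reach_A5_all : ∀ v : Fin 4, v ≠ 3 → ∀ w : Fin 4, Reaches A5X v w := by
  intro v hv w; fin_cases v <;> fin_cases w <;> first | exact absurd rfl hv | exact reach_A5_0_0 | exact reach_A5_0_1 | exact reach_A5_0_2 | exact reach_A5_0_3 | exact reach_A5_1_0 | exact reach_A5_1_1 | exact reach_A5_1_2 | exact reach_A5_1_3 | exact reach_A5_2_0 | exact reach_A5_2_1 | exact reach_A5_2_2 | exact reach_A5_2_3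
lemma reach_B_3_0 : Reaches BX (3:Fin 4) 0 := (.step (v := 1) 1 (by omega) (by decide) (.step (v := 0) 1 (by omega) (by decide) (.refl _ _)))
lemma reach_B_3_1 : Reaches BX (3:Fin 4) 1 := (.step (v := 1) 1 (by omega) (by decide) (.refl _ _))
lemma reach_B_3_2 : Reaches BX (3:Fin 4) 2 := (.step (v := 1) 1 (by omega) (by decide) (.step (v := 0) 1 (by omega) (by decide) (.step (v := 2) 1 (by omega) (by decide) (.refl _ _))))
lemma reach_B_3_3 : Reaches BX (3:Fin 4) 3 := (.refl _ _)
lemma reach_B_all : ∀ w : Fin 4, Reaches BX 3 w := by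
  intro w; fin_cases w <;> first | exact reach_B_3_0 | exact reach_B_3_1 | exact reach_B_3_2 | exact reach_B_3_3
lemma neg_A1 : ∀ (t : ℕ) (v w : Fin 4), ReachFrom A1X t v w → w = 0 →
    v = 0 ∨ (v = 2 ∧ t ≤ 1) ∨ (v = 3 ∧ t ≤ 2) := by
  intro t v w h
  induction h with
  | refl t v => intro hw; subst hw; exact Or.inl rfl
  | step l hle he htail ih =>
    intro hw
    have hq := ih hw
    simp only [A1X, Finset.mem_insert, Finset.mem_singleton, Prod.mk.injEq, Sym2.eq_iff] at he
    rcases he with ⟨he,h3⟩|⟨he,h3⟩|⟨he,h3⟩|⟨he,h3⟩ <;> rcases he with ⟨h1,h2⟩|⟨h1,h2⟩ <;>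
      subst h1 <;> subst h2 <;> subst h3 <;> simp_all <;> omega
lemma neg_A2 : ∀ (t : ℕ) (v w : Fin 4), ReachFrom A2X t v w → w = 0 →
    v = 0 ∨ (v = 1 ∧ t ≤ 1) ∨ (v = 3 ∧ t ≤ 2) := by
  intro t v w h
  induction h with
  | refl t v => intro hw; subst hw; exact Or.inl rfl
  | step l hle he htail ih =>
    intro hw
    have hq := ih hw
    simp only [A2X, Finset.mem_insert, Finset.mem_singleton, Prod.mk.injEq, Sym2.eq_iff] at he
    rcases he with ⟨he,h3⟩|⟨he,h3⟩|⟨he,h3⟩|⟨he,h3⟩ <;> rcases he with ⟨h1,h2⟩|⟨h1,h2⟩ <;>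
      subst h1 <;> subst h2 <;> subst h3 <;> simp_all <;> omega
lemma neg_A3 : ∀ (t : ℕ) (v w : Fin 4), ReachFrom A3X t v w → w = 0 →
    v = 0 ∨ (v = 1 ∧ t ≤ 1) ∨ (v = 2 ∧ t ≤ 1) := by
  intro t v w h
  induction h with
  | refl t v => intro hw; subst hw; exact Or.inl rfl
  | step l hle he htail ih =>
    intro hw
    have hq := ih hw
    simp only [A3X, Finset.mem_insert, Finset.mem_singleton, Prod.mk.injEq, Sym2.eq_iff] at he
    rcases he with ⟨he,h3⟩|⟨he,h3⟩|⟨he,h3⟩|⟨he,h3⟩ <;> rcases he with ⟨h1,h2⟩|⟨h1,h2⟩ <;>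
      subst h1 <;> subst h2 <;> subst h3 <;> simp_all <;> omega
lemma neg_A4 : ∀ (t : ℕ) (v w : Fin 4), ReachFrom A4X t v w → w = 1 →
    v = 1 ∨ (v = 0 ∧ t ≤ 1) ∨ (v = 2 ∧ t ≤ 1) := by
  intro t v w h
  induction h with
  | refl t v => intro hw; subst hw; exact Or.inl rfl
  | step l hle he htail ih =>
    intro hw
    have hq := ih hw
    simp only [A4X, Finset.mem_insert, Finset.mem_singleton, Prod.mk.injEq, Sym2.eq_iff] at he
    rcases he with ⟨he,h3⟩|⟨he,h3⟩|⟨he,h3⟩|⟨he,h3⟩ <;> rcases he with ⟨h1,h2⟩|⟨h1,h2⟩ <;>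
      subst h1 <;> subst h2 <;> subst h3 <;> simp_all <;> omega
lemma neg_A5 : ∀ (t : ℕ) (v w : Fin 4), ReachFrom A5X t v w → w = 2 →
    v = 2 ∨ (v = 0 ∧ t ≤ 1) ∨ (v = 1 ∧ t ≤ 3) := by
  intro t v w h
  induction h with
  | refl t v => intro hw; subst hw; exact Or.inl rfl
  | step l hle he htail ih =>
    intro hw
    have hq := ih hw
    simp only [A5X, Finset.mem_insert, Finset.mem_singleton, Prod.mk.injEq, Sym2.eq_iff] at he
    rcases he with ⟨he,h3⟩|⟨he,h3⟩|⟨he,h3⟩|⟨he,h3⟩ <;> rcases he with ⟨h1,h2⟩|⟨h1,h2⟩ <;>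
      subst h1 <;> subst h2 <;> subst h3 <;> simp_all <;> omega

lemma erase1 : AX.erase (s(0,1),1) = A1X := by decide
lemma erase2 : AX.erase (s(0,2),1) = A2X := by decide
lemma erase3 : AX.erase (s(0,3),2) = A3X := by decide
lemma erase4 : AX.erase (s(1,2),3) = A4X := by decide
lemma erase5 : AX.erase (s(2,3),3) = A5X := by decide


/-- There exist a simple host graph `H` in which all nodes are terminals and an
inclusion minimal terminal spanner `A` of `H` such that no Nash Equilibrium in the global
setting creates `A`. -/
theorem minimal_spanner_not_NE_global :
    ∃ (n : ℕ) (H : HostGraph (Fin n)),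
      H.terminals = Finset.univ ∧ H.Simple ∧
      ∃ A : Finset (TimeEdge (Fin n)),
        IsMinimalTerminalSpanner H A ∧
        ∀ C : ℝ, 1 < C →
          ¬ ∃ s : Profile (Fin n),
              IsEquilibrium H C Setting.glob EqType.nash s ∧ built s = A := by
  have hsimple : HX.Simple := by
    have h : ∀ e : Sym2 (Fin 4), ¬ e.IsDiag → (HX.labels e).card = 1 := by decide
    exact h
  have hvalidAX : ∀ p ∈ AX, HX.ValidTimeEdge p := by
    have h : ∀ p ∈ AX, p.2 ∈ HX.labels p.1 := by decide
    exact h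
  refine ⟨4, HX, rfl, hsimple, AX, ⟨⟨hvalidAX, ?_⟩, ?_⟩, ?_⟩
  · -- AX is a terminal spanner
    intro v t _
    exact reach_A_all v t
  · -- minimality
    intro p hp
    simp only [AX, Finset.mem_insert, Finset.mem_singleton] at hp
    rcases hp with rfl | rfl | rfl | rfl | rfl
    · rintro ⟨-, hr⟩
      have h := hr 1 0 (Finset.mem_univ _)
      rw [erase1] at h
      simpa using neg_A1 0 1 0 h rfl
    · rintro ⟨-, hr⟩
      have h := hr 2 0 (Finset.mem_univ _)
      rw [erase2] at h
      simpa using neg_A2 0 2 0 h rfl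
    · rintro ⟨-, hr⟩
      have h := hr 3 0 (Finset.mem_univ _)
      rw [erase3] at h
      simpa using neg_A3 0 3 0 h rfl
    · rintro ⟨-, hr⟩
      have h := hr 3 1 (Finset.mem_univ _)
      rw [erase4] at h
      simpa using neg_A4 0 3 1 h rfl
    · rintro ⟨-, hr⟩
      have h := hr 3 2 (Finset.mem_univ _)
      rw [erase5] at h
      simpa using neg_A5 0 3 2 h rfl
  · -- no NE builds AX
    rintro C hC ⟨s, ⟨hall, hne⟩, hbuilt⟩
    -- everyone reaches everything in the built graph
    have hreachall : ∀ v w : Fin 4, Reaches (built s) v w := by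
      rw [hbuilt]; exact reach_A_all
    have hcost : ∀ v : Fin 4, cost HX C s v = (((s v).card : ℕ) : ℝ) := fun v =>
      cost_of_reach_all HX C s v (fun t _ => hreachall v t)
    -- dropping a superfluous edge is an improving response
    have hdrop : ∀ (p : TimeEdge (Fin 4)) (v : Fin 4), p ∈ s v →
        (∀ w : Fin 4, Reaches (AX.erase p) v w) → False := by
      intro p v hpv hvreach
      refine hne v ((s v).erase p)
        (fun q hq => hall v q (Finset.mem_of_mem_erase hq))
        (fun h => EqType.noConfusion h) ?_
      have hsub : AX.erase p ⊆ built (update s v ((s v).erase p)) := by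
        intro q hq
        have hq1 : q ∈ built s := by rw [hbuilt]; exact Finset.mem_of_mem_erase hq
        obtain ⟨u, -, hu⟩ := Finset.mem_biUnion.mp hq1
        apply Finset.mem_biUnion.mpr
        by_cases h : u = v
        · subst h
          exact ⟨u, Finset.mem_univ _, by
            simp only [update, if_pos rfl]
            exact Finset.mem_erase.mpr ⟨Finset.ne_of_mem_erase hq, hu⟩⟩
        · exact ⟨u, Finset.mem_univ _, by simp only [update, if_neg h]; exact hu⟩
      have hnew := cost_of_reach_all HX C (update s v ((s v).erase p)) v
        (fun t _ => reach_mono hsub (hvreach t))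
      have hupv : (update s v ((s v).erase p)) v = (s v).erase p := by
        simp [update]
      rw [hnew, hupv, hcost v]
      exact_mod_cast Finset.card_erase_lt_of_mem hpv
    -- owners of the five edges are forced
    have ho1 : ∀ v : Fin 4, (s(0,1),1) ∈ s v → v = 1 := by
      intro v hv
      by_contra hvne
      exact hdrop _ v hv (by rw [erase1]; exact reach_A1_all v hvne)
    have ho2 : ∀ v : Fin 4, (s(0,2),1) ∈ s v → v = 2 := by
      intro v hv
      by_contra hvne
      exact hdrop _ v hv (by rw [erase2]; exact reach_A2_all v hvne)
    have ho3 : ∀ v : Fin 4, (s(0,3),2) ∈ s v → v = 3 := by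
      intro v hv
      by_contra hvne
      exact hdrop _ v hv (by rw [erase3]; exact reach_A3_all v hvne)
    have ho4 : ∀ v : Fin 4, (s(1,2),3) ∈ s v → v = 3 := by
      intro v hv
      by_contra hvne
      exact hdrop _ v hv (by rw [erase4]; exact reach_A4_all v hvne)
    have ho5 : ∀ v : Fin 4, (s(2,3),3) ∈ s v → v = 3 := by
      intro v hv
      by_contra hvne
      exact hdrop _ v hv (by rw [erase5]; exact reach_A5_all v hvne)
    -- hence agent 3 owns at least three edges
    have hmem : ∀ p : TimeEdge (Fin 4), p ∈ AX → ∃ u : Fin 4, p ∈ s u := by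
      intro p hp
      have hpb : p ∈ built s := by rw [hbuilt]; exact hp
      obtain ⟨u, -, hu⟩ := Finset.mem_biUnion.mp hpb
      exact ⟨u, hu⟩
    have h3a : (s(0,3),2) ∈ s 3 := by
      obtain ⟨u, hu⟩ := hmem (s(0,3),2) (by decide)
      rwa [ho3 u hu] at hu
    have h3b : (s(1,2),3) ∈ s 3 := by
      obtain ⟨u, hu⟩ := hmem (s(1,2),3) (by decide)
      rwa [ho4 u hu] at hu
    have h3c : (s(2,3),3) ∈ s 3 := by
      obtain ⟨u, hu⟩ := hmem (s(2,3),3) (by decide)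
      rwa [ho5 u hu] at hu
    have hcard3 : 3 ≤ (s 3).card := by
      have hss : ({(s(0,3),2), (s(1,2),3), (s(2,3),3)} : Finset (TimeEdge (Fin 4))) ⊆ s 3 := by
        intro q hq
        simp only [Finset.mem_insert, Finset.mem_singleton] at hq
        rcases hq with rfl | rfl | rfl
        · exact h3a
        · exact h3b
        · exact h3c
      calc 3 = ({(s(0,3),2), (s(1,2),3), (s(2,3),3)} : Finset (TimeEdge (Fin 4))).card := by decide
        _ ≤ (s 3).card := Finset.card_le_card hss
    -- but then agent 3 can improve by buying the single edge {1,3} at time 1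
    have hallowed13 : Allowed HX Setting.glob 3 {(s(1,3),1)} := by
      have h : ∀ p ∈ ({(s(1,3),1)} : Finset (TimeEdge (Fin 4))), p.2 ∈ HX.labels p.1 := by decide
      exact h
    refine hne 3 {(s(1,3),1)} hallowed13 (fun h => EqType.noConfusion h) ?_
    have hsubB : BX ⊆ built (update s 3 {(s(1,3),1)}) := by
      intro q hq
      simp only [BX, Finset.mem_insert, Finset.mem_singleton] at hq
      apply Finset.mem_biUnion.mpr
      rcases hq with rfl | rfl | rfl
      · obtain ⟨u, hu⟩ := hmem (s(0,1),1) (by decide)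
        rw [ho1 u hu] at hu
        exact ⟨1, Finset.mem_univ _,
          by simp only [update, if_neg (by decide : (1 : Fin 4) ≠ 3)]; exact hu⟩
      · obtain ⟨u, hu⟩ := hmem (s(0,2),1) (by decide)
        rw [ho2 u hu] at hu
        exact ⟨2, Finset.mem_univ _,
          by simp only [update, if_neg (by decide : (2 : Fin 4) ≠ 3)]; exact hu⟩
      · exact ⟨3, Finset.mem_univ _, by simp [update]⟩
    have hnew := cost_of_reach_all HX C (update s 3 {(s(1,3),1)}) 3
      (fun t _ => reach_mono hsubB (reach_B_all t))
    have hupv : (update s 3 {(s(1,3),1)}) 3 = {(s(1,3),1)} := by simp [update]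
    rw [hnew, hupv, hcost 3]
    have hone : ({(s(1,3),1)} : Finset (TimeEdge (Fin 4))).card = 1 := by decide
    rw [hone]
    exact_mod_cast lt_of_lt_of_le (by norm_num) hcard3


end TNCG
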